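/- Let F be an invertible n×n real matrix, B an m×n real matrix, and suppose S = B F⁻¹ Bᵀ is invertible. With A = fromBlocks F Bᵀ B 0 and P = fromBlocks F Bᵀ 0 (−S), the preconditioned matrix M = A · P⁻¹ satisfies (M − I)² = 0; hence the minimal polynomial of M divides (X − 1)², so all Jordan blocks of M have order at most 2. -/

import Mathlib

/-!
The preconditioner `P` is the block upper-triangular factor of `A`: with `S = B F⁻¹ C` the Schur
complement, `A = L P` for the unit lower-triangular `L = fromBlocks 1 0 (B F⁻¹) 1`. Hence
`A P⁻¹ = L`, and `L - 1` is strictly block lower-triangular, so it squares to zero.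
-/

open Matrix Polynomial

namespace Matrix

variable {n m α : Type*} [Fintype n] [Fintype m] [DecidableEq n] [DecidableEq m]

theorem fromBlocks_one_zero_sub_one_sq [Ring α] (L : Matrix m n α) :
    (fromBlocks 1 0 L 1 - 1 : Matrix (n ⊕ m) (n ⊕ m) α) ^ 2 = 0 := by
  rw [← fromBlocks_one, sub_eq_add_neg, fromBlocks_neg, fromBlocks_add, sq, fromBlocks_multiply]
  simp

theorem fromBlocks_mul_inv_fromBlocks_schur [CommRing α] (F : Matrix n n α) (C : Matrix n m α)
    (B : Matrix m n α) (hF : IsUnit F) (hS : IsUnit (B * F⁻¹ * C)) :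
    fromBlocks F C B 0 * (fromBlocks F C 0 (-(B * F⁻¹ * C)))⁻¹ = fromBlocks 1 0 (B * F⁻¹) 1 := by
  set S := B * F⁻¹ * C
  have hFF : F * F⁻¹ = 1 := mul_nonsing_inv F ((isUnit_iff_isUnit_det F).mp hF)
  have hSS : -S * (-S)⁻¹ = 1 := mul_nonsing_inv _ ((isUnit_iff_isUnit_det _).mp hS.neg)
  rw [inv_fromBlocks_zero₂₁_of_isUnit_iff _ _ _ (iff_of_true hF hS.neg), fromBlocks_multiply]
  simp only [Matrix.mul_zero, Matrix.zero_mul, Matrix.mul_neg, add_zero, hFF]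
  congr 1
  · rw [← Matrix.mul_assoc, ← Matrix.mul_assoc, hFF, Matrix.one_mul, neg_add_cancel]
  · rw [← Matrix.mul_assoc, ← Matrix.mul_assoc, ← Matrix.neg_mul, hSS]

end Matrix

theorem minpoly_dvd_X_sub_C_pow {K A : Type*} [Field K] [Ring A] [Algebra K A] {a : A} {c : K}
    {k : ℕ} (h : (a - algebraMap K A c) ^ k = 0) : minpoly K a ∣ (X - C c) ^ k :=
  minpoly.dvd K a (by simpa using h)

/-- With `A = fromBlocks F Bᵀ B 0` and `P = fromBlocks F Bᵀ 0 (-S)` where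
`S = B F⁻¹ Bᵀ`, the preconditioned matrix `M = A * P⁻¹` satisfies `(M - I)² = 0`;
hence the minimal polynomial of `M` divides `(X - 1)²`. -/
theorem preconditioned_saddle_point_sq_nilpotent
    {n m : ℕ} (F : Matrix (Fin n) (Fin n) ℝ) (B : Matrix (Fin m) (Fin n) ℝ)
    (hF : IsUnit F) (hS : IsUnit (B * F⁻¹ * Bᵀ)) :
    ((Matrix.fromBlocks F Bᵀ B 0) *
        (Matrix.fromBlocks F Bᵀ 0 (-(B * F⁻¹ * Bᵀ)))⁻¹ - 1) ^ 2 = 0 ∧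
    minpoly ℝ ((Matrix.fromBlocks F Bᵀ B 0) *
        (Matrix.fromBlocks F Bᵀ 0 (-(B * F⁻¹ * Bᵀ)))⁻¹) ∣
      (Polynomial.X - Polynomial.C 1) ^ 2 := by
  have hsq := fromBlocks_mul_inv_fromBlocks_schur F Bᵀ B hF hS ▸
    fromBlocks_one_zero_sub_one_sq (B * F⁻¹)
  exact ⟨hsq, minpoly_dvd_X_sub_C_pow (by rwa [map_one])⟩
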